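/- arXiv:2309.04023 — 4 statements merged into one kernel-verified Lean document; each statement's English description precedes it below -/
import Mathlib

section
/- Let δ, γ, V be positive reals, v_max ≥ 0 and D ≥ 0 reals, and let Q : ℕ → ℝ be a sequence with Q 0 = 0 that evolves according to Q (k+1) = max (Q k − c k) 0 + A k for every k, where the per-step drain satisfies c k ≥ 0, the per-step arrival satisfies 0 ≤ A k ≤ D, and A k = 0 whenever Q k > V·(v_max + γ·δ) (the idle rule of BOLA360). Then for every k, Q k ≤ V·(v_max + γ·δ) + D. -/
/-!
Above the idle threshold `B` nothing arrives and the drain is nonnegative, so the buffer cannot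
grow; at or below `B` one step adds at most `D`. Hence `B + D` is an invariant level of the
recursion, and it holds initially because the buffer starts empty.
-/

section BufferRecursion

variable {α : Type*} [AddCommGroup α] [LinearOrder α] [IsOrderedAddMonoid α]

theorem max_sub_zero_add_le_of_idle {q c a B D : α} (hB : 0 ≤ B) (hD : 0 ≤ D) (hc : 0 ≤ c)
    (haD : a ≤ D) (hidle : B < q → a = 0) (hq : q ≤ B + D) :
    max (q - c) 0 + a ≤ B + D := by
  rcases lt_or_ge B q with hBq | hqB
  · rw [hidle hBq, add_zero]
    exact max_le ((sub_le_self q hc).trans hq) (add_nonneg hB hD)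
  · exact add_le_add (max_le ((sub_le_self q hc).trans hqB) hB) haD

theorem buffer_le_of_idle_above {Q c A : ℕ → α} {B D : α} (hB : 0 ≤ B) (hD : 0 ≤ D)
    (hQ0 : Q 0 ≤ B + D) (hev : ∀ k, Q (k + 1) = max (Q k - c k) 0 + A k)
    (hc : ∀ k, 0 ≤ c k) (hAD : ∀ k, A k ≤ D) (hidle : ∀ k, B < Q k → A k = 0) :
    ∀ k, Q k ≤ B + D := by
  intro k
  induction k with
  | zero => exact hQ0
  | succ k ih => exact hev k ▸ max_sub_zero_add_le_of_idle hB hD (hc k) (hAD k) (hidle k) ih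

end BufferRecursion

theorem bola360_buffer_bound_general
    (δ γ V v_max D : ℝ) (hδ : 0 < δ) (hγ : 0 < γ) (hV : 0 < V)
    (hv : 0 ≤ v_max) (hD : 0 ≤ D)
    (Q c A : ℕ → ℝ) (hQ0 : Q 0 = 0)
    (hev : ∀ k, Q (k + 1) = max (Q k - c k) 0 + A k)
    (hc : ∀ k, 0 ≤ c k)
    (hAD : ∀ k, A k ≤ D)
    (hidle : ∀ k, Q k > V * (v_max + γ * δ) → A k = 0) :
    ∀ k, Q k ≤ V * (v_max + γ * δ) + D := by
  have hB : 0 ≤ V * (v_max + γ * δ) := by positivity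
  exact buffer_le_of_idle_above hB hD (hQ0 ▸ add_nonneg hB hD) hev hc hAD hidle

/-- Deterministic core of Theorem 1 (buffer bound of BOLA360): under the buffer
evolution with bounded arrivals and the idle rule, the buffer level never
exceeds `V*(v_max + γ*δ) + D`. -/
theorem bola360_buffer_bound
    (δ γ V v_max D : ℝ) (hδ : 0 < δ) (hγ : 0 < γ) (hV : 0 < V)
    (hv : 0 ≤ v_max) (hD : 0 ≤ D)
    (Q c A : ℕ → ℝ) (hQ0 : Q 0 = 0)
    (hev : ∀ k, Q (k + 1) = max (Q k - c k) 0 + A k)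
    (hc : ∀ k, 0 ≤ c k)
    (hA0 : ∀ k, 0 ≤ A k) (hAD : ∀ k, A k ≤ D)
    (hidle : ∀ k, Q k > V * (v_max + γ * δ) → A k = 0) :
    ∀ k, Q k ≤ V * (v_max + γ * δ) + D :=
  bola360_buffer_bound_general δ γ V v_max D hδ hγ hV hv hD Q c A hQ0 hev hc hAD hidle
end

section
/- Let δ, γ, V be positive reals, v_max ≥ 0 and D ≥ 0 reals, let Q_max be a real with V < (Q_max − D)/(v_max + γ·δ) and v_max + γ·δ > 0, and let Q : ℕ → ℝ be a sequence with Q 0 = 0 satisfying Q (k+1) = max (Q k − c k) 0 + A k for every k, with c k ≥ 0, 0 ≤ A k ≤ D, and A k = 0 whenever Q k > V·(v_max + γ·δ). Then for every k, Q k ≤ Q_max; that is, the buffer capacity constraint is never violated. -/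
/-! The threshold rule keeps the buffer below `V (v_max + γ δ) + D`: above the threshold
`V (v_max + γ δ)` nothing is downloaded, so the buffer cannot grow, and at or below it one
chunk adds at most `D` segments. The admissible range of `V` puts this bound below `Q_max`. -/

theorem max_sub_add_le_of_idle_above {q c a B D : ℝ} (hB : 0 ≤ B)
    (hc : 0 ≤ c) (ha : a ≤ D) (hidle : B < q → a = 0) (hq : q ≤ B + D) :
    max (q - c) 0 + a ≤ B + D := by
  rcases lt_or_ge B q with hBq | hqB
  · rw [hidle hBq, add_zero]
    exact max_le (by linarith) (by linarith)
  · have : max (q - c) 0 ≤ B := max_le (by linarith) hB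
    linarith

theorem le_add_of_idle_above {Q c A : ℕ → ℝ} {B D : ℝ} (hB : 0 ≤ B)
    (hQ0 : Q 0 ≤ B + D) (hev : ∀ k, Q (k + 1) = max (Q k - c k) 0 + A k)
    (hc : ∀ k, 0 ≤ c k) (hAD : ∀ k, A k ≤ D) (hidle : ∀ k, B < Q k → A k = 0) :
    ∀ k, Q k ≤ B + D := by
  intro k
  induction k with
  | zero => exact hQ0
  | succ k ih =>
    rw [hev k]
    exact max_sub_add_le_of_idle_above hB (hc k) (hAD k) (hidle k) ih

theorem bola360_buffer_capacity_general
    (δ γ V v_max D Q_max : ℝ) (hV : 0 < V)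
    (hD : 0 ≤ D)
    (hden : 0 < v_max + γ * δ)
    (hVQ : V < (Q_max - D) / (v_max + γ * δ))
    (Q c A : ℕ → ℝ) (hQ0 : Q 0 = 0)
    (hev : ∀ k, Q (k + 1) = max (Q k - c k) 0 + A k)
    (hc : ∀ k, 0 ≤ c k)
    (hAD : ∀ k, A k ≤ D)
    (hidle : ∀ k, Q k > V * (v_max + γ * δ) → A k = 0) :
    ∀ k, Q k ≤ Q_max := by
  have hthreshold : 0 ≤ V * (v_max + γ * δ) := mul_nonneg hV.le hden.le
  have hcapacity : V * (v_max + γ * δ) + D < Q_max := by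
    linarith [(lt_div_iff₀ hden).mp hVQ]
  have hstart : Q 0 ≤ V * (v_max + γ * δ) + D := by rw [hQ0]; positivity
  intro k
  exact (le_add_of_idle_above hthreshold hstart hev hc hAD hidle k).trans hcapacity.le

/-- Consequence of Theorem 1: with the control parameter `V` in the admissible
range `V < (Q_max - D)/(v_max + γ*δ)`, BOLA360 never violates the buffer
capacity `Q_max`. -/
theorem bola360_buffer_capacity
    (δ γ V v_max D Q_max : ℝ) (hδ : 0 < δ) (hγ : 0 < γ) (hV : 0 < V)
    (hv : 0 ≤ v_max) (hD : 0 ≤ D)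
    (hden : 0 < v_max + γ * δ)
    (hVQ : V < (Q_max - D) / (v_max + γ * δ))
    (Q c A : ℕ → ℝ) (hQ0 : Q 0 = 0)
    (hev : ∀ k, Q (k + 1) = max (Q k - c k) 0 + A k)
    (hc : ∀ k, 0 ≤ c k)
    (hA0 : ∀ k, 0 ≤ A k) (hAD : ∀ k, A k ≤ D)
    (hidle : ∀ k, Q k > V * (v_max + γ * δ) → A k = 0) :
    ∀ k, Q k ≤ Q_max :=
  bola360_buffer_capacity_general δ γ V v_max D Q_max hV hD hden hVQ Q c A hQ0 hev hc hAD hidle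
end

section
/- Let δ, γ, V be positive reals, let D, M be positive naturals, let p : Fin D → ℝ satisfy 0 ≤ p d ≤ 1 for all d, let v : Fin M → ℝ satisfy v m ≤ v_max for all m (with v_max ≥ 0), let S : Fin M → ℝ satisfy S m > 0 for all m, and suppose the buffer level Q satisfies Q > V·(v_max + γ·δ). Then for every tile d and bitrate m, (V·(v m · p d + γ·δ) − Q)/S m < 0; consequently every decision vector a : Fin D → Fin M → {0,1} that downloads at least one segment has η(a) = Σ_{d,m} a d m·(V(v m·p d + γδ) − Q)/S m < 0, while the all-zero decision vector has η = 0, so the unique optimal action is to download nothing. -/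
open Finset

theorem mul_le_of_le_of_mem_unitInterval {v w p : ℝ} (hv : v ≤ w) (hw : 0 ≤ w) (hp₀ : 0 ≤ p)
    (hp₁ : p ≤ 1) : v * p ≤ w :=
  (mul_le_mul_of_nonneg_right hv hp₀).trans (mul_le_of_le_one_right hw hp₁)

theorem bola_score_neg {V v v_max p c Q S : ℝ} (hV : 0 ≤ V) (hv_max : 0 ≤ v_max) (hv : v ≤ v_max)
    (hp₀ : 0 ≤ p) (hp₁ : p ≤ 1) (hS : 0 < S) (hQ : V * (v_max + c) < Q) :
    (V * (v * p + c) - Q) / S < 0 := by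
  refine div_neg_of_neg_of_pos (sub_neg.2 (lt_of_le_of_lt ?_ hQ)) hS
  gcongr
  exact mul_le_of_le_of_mem_unitInterval hv hv_max hp₀ hp₁

theorem Fintype.sum_mul_neg_of_zero_or_one {ι R : Type*} [Fintype ι] [Semiring R] [PartialOrder R]
    [IsOrderedCancelAddMonoid R] {a c : ι → R} (ha : ∀ i, a i = 0 ∨ a i = 1)
    (hc : ∀ i, c i < 0) (h : ∃ i, a i = 1) : ∑ i, a i * c i < 0 := by
  have hterm : ∀ i, a i * c i ≤ 0 := fun i => by
    rcases ha i with hi | hi <;> simp [hi, (hc i).le]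
  obtain ⟨i, hi⟩ := h
  exact sum_neg' (fun j _ => hterm j) ⟨i, mem_univ i, by simpa [hi] using hc i⟩

theorem bola360_idle_state_general
    (δ γ V v_max : ℝ) (hV : 0 < V) (hvmax : 0 ≤ v_max)
    (D M : ℕ)
    (p : Fin D → ℝ) (hp : ∀ d, 0 ≤ p d ∧ p d ≤ 1)
    (v : Fin M → ℝ) (hv : ∀ m, v m ≤ v_max)
    (S : Fin M → ℝ) (hS : ∀ m, 0 < S m)
    (Q : ℝ) (hQ : Q > V * (v_max + γ * δ)) :
    (∀ d m, (V * (v m * p d + γ * δ) - Q) / S m < 0) ∧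
    (∀ a : Fin D → Fin M → ℝ, (∀ d m, a d m = 0 ∨ a d m = 1) →
      (∃ d m, a d m = 1) →
      ∑ d, ∑ m, a d m * ((V * (v m * p d + γ * δ) - Q) / S m) < 0) ∧
    (∑ d : Fin D, ∑ m : Fin M,
      (0 : ℝ) * ((V * (v m * p d + γ * δ) - Q) / S m) = 0) := by
  have hscore : ∀ d m, (V * (v m * p d + γ * δ) - Q) / S m < 0 := fun d m =>
    bola_score_neg hV.le hvmax (hv m) (hp d).1 (hp d).2 (hS m) hQ
  refine ⟨hscore, fun a ha ⟨d, m, hdm⟩ => ?_, by simp⟩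
  rw [← Fintype.sum_prod_type' (fun d m => a d m * ((V * (v m * p d + γ * δ) - Q) / S m))]
  exact Fintype.sum_mul_neg_of_zero_or_one (fun x => ha x.1 x.2) (fun x => hscore x.1 x.2)
    ⟨(d, m), hdm⟩

/-- Idle-state property of BOLA360: when the buffer level exceeds
`V·(v_max + γ·δ)`, every per-term index is negative, every decision vector
downloading at least one segment has strictly negative objective, and the
all-zero decision vector attains objective `0`, so the unique optimal action
is to download nothing. -/
theorem bola360_idle_state
    (δ γ V v_max : ℝ) (hδ : 0 < δ) (hγ : 0 < γ) (hV : 0 < V) (hvmax : 0 ≤ v_max)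
    (D M : ℕ) (hD : 0 < D) (hM : 0 < M)
    (p : Fin D → ℝ) (hp : ∀ d, 0 ≤ p d ∧ p d ≤ 1)
    (v : Fin M → ℝ) (hv : ∀ m, v m ≤ v_max)
    (S : Fin M → ℝ) (hS : ∀ m, 0 < S m)
    (Q : ℝ) (hQ : Q > V * (v_max + γ * δ)) :
    (∀ d m, (V * (v m * p d + γ * δ) - Q) / S m < 0) ∧
    (∀ a : Fin D → Fin M → ℝ, (∀ d m, a d m = 0 ∨ a d m = 1) →
      (∃ d m, a d m = 1) →
      ∑ d, ∑ m, a d m * ((V * (v m * p d + γ * δ) - Q) / S m) < 0) ∧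
    (∑ d : Fin D, ∑ m : Fin M,
      (0 : ℝ) * ((V * (v m * p d + γ * δ) - Q) / S m) = 0) :=
  bola360_idle_state_general δ γ V v_max hV hvmax D M p hp v hv S hS Q hQ
end

section
/- Let V, γ, δ be positive reals, p ≥ 0 a real, M a positive natural, v : Fin M → ℝ, and S : Fin M → ℝ strictly increasing with S m > 0 for all m. For a buffer level Q define f_Q(m) = (V·(v m · p + γ·δ) − Q)/S m. Then f_Q satisfies the single-crossing property in Q: for bitrates m' < m, the difference f_Q(m) − f_Q(m') is nondecreasing in Q. Consequently, if Q₁ ≤ Q₂, m₁ maximizes f_{Q₁} over Fin M, m₂ maximizes f_{Q₂} over Fin M, and m₂ < m₁, then m₁ also maximizes f_{Q₂} and m₂ also maximizes f_{Q₁}; in particular the largest maximizing bitrate index is nondecreasing in the buffer level Q. -/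
/-!
The index is affine in the buffer level `Q` with slope `-1 / S m`, so a larger segment has a
flatter slope and the advantage of a higher bitrate over a lower one grows with `Q`. This
increasing-differences property is all that is needed to compare maximizers at two buffer levels.
-/

theorem monotone_sub_div_sub_sub_div {a b s s' : ℝ} (hs' : 0 < s') (hs's : s' ≤ s) :
    Monotone fun Q : ℝ => (a - Q) / s - (b - Q) / s' := by
  intro Q₁ Q₂ hQ
  have hinv : 1 / s ≤ 1 / s' := one_div_le_one_div_of_le hs' hs's
  have hslope : Q₁ * (1 / s' - 1 / s) ≤ Q₂ * (1 / s' - 1 / s) :=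
    mul_le_mul_of_nonneg_right hQ (sub_nonneg.2 hinv)
  have hrewrite : ∀ Q, (a - Q) / s - (b - Q) / s' = a / s - b / s' + Q * (1 / s' - 1 / s) := by
    intro Q; ring
  simp only [hrewrite]
  linarith

theorem maximizers_swap_of_monotone_sub {ι α β : Type*} [Preorder α] [AddCommGroup β]
    [PartialOrder β] [IsOrderedAddMonoid β] {f : ι → α → β} {m₁ m₂ : ι} {Q₁ Q₂ : α}
    (hmono : Monotone fun Q => f m₁ Q - f m₂ Q) (hQ : Q₁ ≤ Q₂)
    (hmax₁ : ∀ m, f m Q₁ ≤ f m₁ Q₁) (hmax₂ : ∀ m, f m Q₂ ≤ f m₂ Q₂) :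
    (∀ m, f m Q₂ ≤ f m₁ Q₂) ∧ (∀ m, f m Q₁ ≤ f m₂ Q₁) := by
  have hgap := hmono hQ
  have h₂₁ : f m₂ Q₂ ≤ f m₁ Q₂ :=
    sub_nonneg.1 ((sub_nonneg.2 (hmax₁ m₂)).trans hgap)
  have h₁₂ : f m₁ Q₁ ≤ f m₂ Q₁ :=
    sub_nonpos.1 (hgap.trans (sub_nonpos.2 (hmax₂ m₁)))
  exact ⟨fun m => (hmax₂ m).trans h₂₁, fun m => (hmax₁ m).trans h₁₂⟩

theorem bola360_single_crossing_general
    (V γ δ p : ℝ)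
    (M : ℕ) (v : Fin M → ℝ) (S : Fin M → ℝ)
    (hSmono : StrictMono S) (hSpos : ∀ m, 0 < S m) :
    (∀ m' m : Fin M, m' < m →
      Monotone (fun Q : ℝ =>
        (V * (v m * p + γ * δ) - Q) / S m -
          (V * (v m' * p + γ * δ) - Q) / S m')) ∧
    (∀ Q₁ Q₂ : ℝ, Q₁ ≤ Q₂ → ∀ m₁ m₂ : Fin M,
      (∀ m, (V * (v m * p + γ * δ) - Q₁) / S m ≤
        (V * (v m₁ * p + γ * δ) - Q₁) / S m₁) →
      (∀ m, (V * (v m * p + γ * δ) - Q₂) / S m ≤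
        (V * (v m₂ * p + γ * δ) - Q₂) / S m₂) →
      m₂ < m₁ →
      ((∀ m, (V * (v m * p + γ * δ) - Q₂) / S m ≤
          (V * (v m₁ * p + γ * δ) - Q₂) / S m₁) ∧
       (∀ m, (V * (v m * p + γ * δ) - Q₁) / S m ≤
          (V * (v m₂ * p + γ * δ) - Q₁) / S m₂))) := by
  have hcross : ∀ m' m : Fin M, m' < m →
      Monotone (fun Q : ℝ =>
        (V * (v m * p + γ * δ) - Q) / S m -
          (V * (v m' * p + γ * δ) - Q) / S m') := fun m' m hlt =>
    monotone_sub_div_sub_sub_div (hSpos m') (hSmono hlt).le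
  exact ⟨hcross, fun Q₁ Q₂ hQ m₁ m₂ hmax₁ hmax₂ hlt =>
    maximizers_swap_of_monotone_sub (f := fun m Q => (V * (v m * p + γ * δ) - Q) / S m)
      (hcross m₂ m₁ hlt) hQ hmax₁ hmax₂⟩

/-- Single-crossing property of the BOLA360 per-tile index
`f_Q(m) = (V·(v m·p + γ·δ) − Q)/S m` in the buffer level `Q`: for `m' < m`
the difference `f_Q m − f_Q m'` is nondecreasing in `Q`; consequently if
`Q₁ ≤ Q₂`, `m₁` maximizes `f_{Q₁}`, `m₂` maximizes `f_{Q₂}` and `m₂ < m₁`,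
then `m₁` also maximizes `f_{Q₂}` and `m₂` also maximizes `f_{Q₁}` (so the
largest maximizing bitrate is nondecreasing in the buffer level). -/
theorem bola360_single_crossing
    (V γ δ p : ℝ) (hV : 0 < V) (hγ : 0 < γ) (hδ : 0 < δ) (hp : 0 ≤ p)
    (M : ℕ) (hM : 0 < M) (v : Fin M → ℝ) (S : Fin M → ℝ)
    (hSmono : StrictMono S) (hSpos : ∀ m, 0 < S m) :
    (∀ m' m : Fin M, m' < m →
      Monotone (fun Q : ℝ =>
        (V * (v m * p + γ * δ) - Q) / S m -
          (V * (v m' * p + γ * δ) - Q) / S m')) ∧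
    (∀ Q₁ Q₂ : ℝ, Q₁ ≤ Q₂ → ∀ m₁ m₂ : Fin M,
      (∀ m, (V * (v m * p + γ * δ) - Q₁) / S m ≤
        (V * (v m₁ * p + γ * δ) - Q₁) / S m₁) →
      (∀ m, (V * (v m * p + γ * δ) - Q₂) / S m ≤
        (V * (v m₂ * p + γ * δ) - Q₂) / S m₂) →
      m₂ < m₁ →
      ((∀ m, (V * (v m * p + γ * δ) - Q₂) / S m ≤
          (V * (v m₁ * p + γ * δ) - Q₂) / S m₁) ∧
       (∀ m, (V * (v m * p + γ * δ) - Q₁) / S m ≤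
          (V * (v m₂ * p + γ * δ) - Q₁) / S m₂))) :=
  bola360_single_crossing_general V γ δ p M v S hSmono hSpos
end
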